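/- Let L > 0 and let λ⁺, λ⁻ be real numbers with |λ⁺|, |λ⁻| ≤ Λ. Let θ₊, θ₀, θ₋ ≥ −L be reals and suppose Δt/Δx ≤ 1/(2Λ). Define θ' + L = (1 − (Δt/Δx)(λ⁻₋ + λ⁺₊))(θ₀+L) + (Δt/Δx)λ⁻₊(θ₊+L) + (Δt/Δx)λ⁺₋(θ₋+L), where x₊, x₋ are positive/negative parts and λ⁻₋ denotes (λ⁻)₋ etc. Then θ' + L ≥ 0 and θ' + L ≤ (1 + (Δt/Δx)(λ⁻ − λ⁺)) · max(θ₊+L, θ₀+L, θ₋+L). -/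
import Mathlib


/-- Positive part of a real number: `x₊ = (x + |x|)/2`. -/
noncomputable def posPart' (x : ℝ) : ℝ := (x + |x|) / 2

/-- Negative part of a real number: `x₋ = (|x| − x)/2`. -/
noncomputable def negPart' (x : ℝ) : ℝ := (|x| - x) / 2

/-- The upwind update of the shifted discrete gradient is a convex combination of
nonnegative quantities: under the CFL condition `Δt/Δx ≤ 1/(2Λ)` with
`|λ⁺|, |λ⁻| ≤ Λ` and `θ₊, θ₀, θ₋ ≥ −L`, the quantity
`θ' + L = (1 − (Δt/Δx)(λ⁻₋ + λ⁺₊))(θ₀+L) + (Δt/Δx) λ⁻₊ (θ₊+L) + (Δt/Δx) λ⁺₋ (θ₋+L)`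
satisfies `θ' + L ≥ 0` and
`θ' + L ≤ (1 + (Δt/Δx)(λ⁻ − λ⁺)) · max(θ₊+L, θ₀+L, θ₋+L)`. -/
theorem stmt_18 (L Λ lamP lamM θp θ0 θm θ' Δt Δx : ℝ)
    (hL : 0 < L) (hΔt : 0 < Δt) (hΔx : 0 < Δx)
    (hP : |lamP| ≤ Λ) (hM : |lamM| ≤ Λ)
    (hθp : -L ≤ θp) (hθ0 : -L ≤ θ0) (hθm : -L ≤ θm)
    (hCFL : Δt / Δx ≤ 1 / (2 * Λ))
    (hup : θ' + L =
      (1 - Δt / Δx * (negPart' lamM + posPart' lamP)) * (θ0 + L)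
      + Δt / Δx * posPart' lamM * (θp + L)
      + Δt / Δx * negPart' lamP * (θm + L)) :
    0 ≤ θ' + L ∧
      θ' + L ≤ (1 + Δt / Δx * (lamM - lamP)) * max (θp + L) (max (θ0 + L) (θm + L)) := by
  have hr : 0 < Δt / Δx := div_pos hΔt hΔx
  have hΛ0 : 0 ≤ Λ := le_trans (abs_nonneg _) hP
  have hΛ : 0 < Λ := by
    rcases hΛ0.lt_or_eq with h | h
    · exact h
    · exfalso; rw [← h] at hCFL; simp at hCFL; linarith
  have hpP : 0 ≤ posPart' lamP := by
    unfold posPart'; have := neg_abs_le lamP; linarith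
  have hnP : 0 ≤ negPart' lamP := by
    unfold negPart'; have := le_abs_self lamP; linarith
  have hpM : 0 ≤ posPart' lamM := by
    unfold posPart'; have := neg_abs_le lamM; linarith
  have hnM : 0 ≤ negPart' lamM := by
    unfold negPart'; have := le_abs_self lamM; linarith
  have hsum : negPart' lamM + posPart' lamP ≤ 2 * Λ := by
    unfold posPart' negPart'
    have h1 := le_abs_self lamP
    have h2 := neg_abs_le lamM
    linarith
  have h2Λ : (0:ℝ) < 2 * Λ := by linarith
  have hCFL' : Δt / Δx * (2 * Λ) ≤ 1 := by
    have := (le_div_iff₀ h2Λ).mp hCFL; linarith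
  have hcoef : 0 ≤ 1 - Δt / Δx * (negPart' lamM + posPart' lamP) := by
    have h3 := mul_le_mul_of_nonneg_left hsum hr.le
    linarith
  have hθ0' : 0 ≤ θ0 + L := by linarith
  have hθp' : 0 ≤ θp + L := by linarith
  have hθm' : 0 ≤ θm + L := by linarith
  constructor
  · rw [hup]
    have := mul_nonneg hcoef hθ0'
    have := mul_nonneg (mul_nonneg hr.le hpM) hθp'
    have := mul_nonneg (mul_nonneg hr.le hnP) hθm'
    linarith
  · set M := max (θp + L) (max (θ0 + L) (θm + L)) with hMdef
    have hMp : θp + L ≤ M := le_max_left _ _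
    have hM0 : θ0 + L ≤ M := le_trans (le_max_left _ _) (le_max_right _ _)
    have hMm : θm + L ≤ M := le_trans (le_max_right _ _) (le_max_right _ _)
    have e1 := mul_le_mul_of_nonneg_left hM0 hcoef
    have e2 := mul_le_mul_of_nonneg_left hMp (mul_nonneg hr.le hpM)
    have e3 := mul_le_mul_of_nonneg_left hMm (mul_nonneg hr.le hnP)
    have key : (1 + Δt / Δx * (lamM - lamP)) * M =
        (1 - Δt / Δx * (negPart' lamM + posPart' lamP)) * M
        + Δt / Δx * posPart' lamM * M + Δt / Δx * negPart' lamP * M := by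
      unfold posPart' negPart'; ring
    rw [hup, key]
    exact add_le_add (add_le_add e1 e2) e3
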